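/- arXiv:1102.4744 — 5 statements merged into one kernel-verified Lean document; each statement's English description precedes it below -/
import Mathlib

section
/- Let A be real and B > 0 real with A/B not an integer. Then for every m ∈ ℤ: Δ(m, m, A, B) = B, Δ(m+1, m, A, B) = B, and Δ(m+2, m, A, B) = (A + B·(m+1) − 1)·B. -/
/-!
Write `J_ν(z) = (z/2)^ν g_ν((z/2)²)` with `g_ν` an entire power series. A coefficient identity
for `g_ν` gives the three-term recurrence `J_{ν-1} + J_{ν+1} = (2ν/z) J_ν`, hence the same for
`Y_ν`. The Cauchy product `g_ν g_{-ν-1} + t g_{ν+1} g_{-ν}` is the constant `1/(Γ(ν+1) Γ(-ν))`,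
since by the product formula for Bessel series all its higher coefficients cancel; with Euler's
reflection formula this is the Wronskian `J_{ν+1} Y_ν - J_ν Y_{ν+1} = 2/(πz)`.
At `z = 2/B`, `ν = n + A/B` the Wronskian reads `Υ(n+1, n) = B` and the recurrence gives
`Υ(n+2, n) = (A + B(n+1)) Υ(n+1, n)`; the three values of `Δ` follow.
-/

open Real

/-- Bessel function of the first kind of real order `ν`, for real `z > 0`,
defined by the series `∑ (−1)^m / (m! Γ(m+ν+1)) (z/2)^(2m+ν)` (real powers). -/
noncomputable def besselJ (ν z : ℝ) : ℝ :=
  ∑' m : ℕ, ((-1 : ℝ) ^ m / (m.factorial * Real.Gamma ((m : ℝ) + ν + 1)))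
      * (z / 2) ^ (2 * (m : ℝ) + ν)

/-- Bessel function of the second kind for non-integer real order. -/
noncomputable def besselY (ν z : ℝ) : ℝ :=
  (besselJ ν z * Real.cos (ν * Real.pi) - besselJ (-ν) z) / Real.sin (ν * Real.pi)

/-- `Ĵ_n = J_{n+A/B}(2/B)`. -/
noncomputable def Jhat (A B : ℝ) (n : ℤ) : ℝ := besselJ ((n : ℝ) + A / B) (2 / B)

/-- `Ŷ_n = Y_{n+A/B}(2/B)`. -/
noncomputable def Yhat (A B : ℝ) (n : ℤ) : ℝ := besselY ((n : ℝ) + A / B) (2 / B)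

/-- `Υ(n, m, A, B) = π (Ĵ_n Ŷ_m − Ĵ_m Ŷ_n)`. -/
noncomputable def Ups (n m : ℤ) (A B : ℝ) : ℝ :=
  Real.pi * (Jhat A B n * Yhat A B m - Jhat A B m * Yhat A B n)
/-- `Δ(n, m, A, B) = Υ(n, m, A, B) − Υ(n−1, m, A, B)`. -/
noncomputable def Dlt (n m : ℤ) (A B : ℝ) : ℝ := Ups n m A B - Ups (n - 1) m A B

open Finset

/-- The reciprocal Gamma function; at the poles of `Γ` the convention `0⁻¹ = 0` gives its true
value `0`. -/
noncomputable def invGamma (x : ℝ) : ℝ := (Gamma x)⁻¹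

lemma invGamma_eq_mul_invGamma_add_one (x : ℝ) : invGamma x = x * invGamma (x + 1) := by
  rcases eq_or_ne x 0 with rfl | hx
  · simp [invGamma]
  · rw [invGamma, invGamma, Gamma_add_one hx, mul_inv, mul_inv_cancel_left₀ hx]

lemma invGamma_add_one_mul_invGamma_neg (ν : ℝ) :
    invGamma (ν + 1) * invGamma (-ν) = -sin (ν * π) / π := by
  have h := Gamma_mul_Gamma_one_sub (ν + 1)
  rw [show 1 - (ν + 1) = -ν by ring, show π * (ν + 1) = ν * π + π by ring, sin_add_pi] at h
  rw [invGamma, invGamma, ← mul_inv, h, div_neg, inv_neg, inv_div, neg_div]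

noncomputable def besselCoeff (ν : ℝ) (m : ℕ) : ℝ :=
  (-1) ^ m * invGamma (m + ν + 1) / m.factorial

lemma besselCoeff_eq_mul_besselCoeff_add_one (ν : ℝ) (m : ℕ) :
    besselCoeff ν m = (m + ν + 1) * besselCoeff (ν + 1) m := by
  rw [besselCoeff, besselCoeff, invGamma_eq_mul_invGamma_add_one, ← add_assoc]
  ring

lemma succ_mul_besselCoeff_succ (ν : ℝ) (m : ℕ) :
    (m + 1) * besselCoeff ν (m + 1) = -besselCoeff (ν + 1) m := by
  rw [besselCoeff, besselCoeff, Nat.factorial_succ, pow_succ]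
  push_cast
  rw [show (m : ℝ) + 1 + ν + 1 = m + (ν + 1) + 1 by ring]
  field_simp

lemma besselCoeff_succ_mul (ν : ℝ) (m : ℕ) :
    besselCoeff ν (m + 1) * ((m + 1) * (m + ν + 1)) = -besselCoeff ν m := by
  rw [besselCoeff_eq_mul_besselCoeff_add_one ν m, neg_mul_eq_mul_neg, ← succ_mul_besselCoeff_succ]
  ring

lemma summable_norm_besselCoeff_mul_pow (ν t : ℝ) :
    Summable fun m : ℕ => ‖besselCoeff ν m * t ^ m‖ := by
  refine summable_of_ratio_norm_eventually_le (r := 1 / 2) (by norm_num) ?_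
  obtain ⟨N, hN⟩ := exists_nat_gt (2 * |t| + |ν|)
  filter_upwards [Filter.eventually_ge_atTop N] with m hm
  have hmN : (N : ℝ) ≤ m := by exact_mod_cast hm
  set D := ((m : ℝ) + 1) * (m + ν + 1)
  have hD : 2 * |t| ≤ D := by nlinarith [neg_abs_le ν, abs_nonneg t]
  have hD0 : 0 < D := by nlinarith [neg_abs_le ν, abs_nonneg t]
  have hratio : ‖besselCoeff ν (m + 1) * t ^ (m + 1)‖ * D = ‖besselCoeff ν m * t ^ m‖ * |t| := by
    rw [← abs_of_pos hD0]
    simp only [Real.norm_eq_abs, ← abs_mul]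
    rw [show besselCoeff ν (m + 1) * t ^ (m + 1) * D = besselCoeff ν (m + 1) * D * t ^ m * t by
      ring, besselCoeff_succ_mul, neg_mul, neg_mul, abs_neg]
  rw [norm_norm, norm_norm]
  refine le_of_mul_le_mul_right ?_ hD0
  rw [hratio]
  nlinarith [norm_nonneg (besselCoeff ν m * t ^ m), abs_nonneg t]

noncomputable def besselSeries (ν t : ℝ) : ℝ := ∑' m : ℕ, besselCoeff ν m * t ^ m

lemma besselJ_eq_rpow_mul_besselSeries {z : ℝ} (hz : 0 < z) (ν : ℝ) :
    besselJ ν z = (z / 2) ^ ν * besselSeries ν ((z / 2) ^ 2) := by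
  rw [besselJ, besselSeries, ← tsum_mul_left]
  congr 1 with m
  rw [rpow_add (by positivity), show 2 * (m : ℝ) = ((2 * m : ℕ) : ℝ) by push_cast; ring,
    rpow_natCast, pow_mul, besselCoeff, invGamma]
  ring

lemma besselSeries_sub_one_add_mul (ν t : ℝ) :
    besselSeries (ν - 1) t + t * besselSeries (ν + 1) t = ν * besselSeries ν t := by
  have hsum (μ : ℝ) : Summable fun m : ℕ => besselCoeff μ (m + 1) * t ^ (m + 1) :=
    (summable_nat_add_iff 1).mpr (summable_norm_besselCoeff_mul_pow μ t).of_norm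
  have hcoeff (m : ℕ) :
      besselCoeff (ν - 1) (m + 1) + besselCoeff (ν + 1) m = ν * besselCoeff ν (m + 1) := by
    rw [besselCoeff_eq_mul_besselCoeff_add_one, sub_add_cancel, neg_eq_iff_eq_neg.mp
      (succ_mul_besselCoeff_succ ν m).symm]
    push_cast
    ring
  have hzero : besselCoeff (ν - 1) 0 = ν * besselCoeff ν 0 := by
    rw [besselCoeff_eq_mul_besselCoeff_add_one, sub_add_cancel]
    simp
  have hsplit (μ : ℝ) := (summable_norm_besselCoeff_mul_pow μ t).of_norm.tsum_eq_zero_add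
  have hshift : t * besselSeries (ν + 1) t = ∑' m : ℕ, besselCoeff (ν + 1) m * t ^ (m + 1) := by
    rw [besselSeries, ← tsum_mul_left]
    congr 1 with m
    ring
  calc besselSeries (ν - 1) t + t * besselSeries (ν + 1) t
      = besselCoeff (ν - 1) 0 + ∑' m : ℕ, (besselCoeff (ν - 1) (m + 1) + besselCoeff (ν + 1) m)
          * t ^ (m + 1) := by
        simp only [add_mul]
        rw [hshift, besselSeries, hsplit, pow_zero, mul_one, add_assoc, (hsum _).tsum_add]
        exact ((summable_norm_besselCoeff_mul_pow _ t).of_norm.mul_left t).congr fun m => by ring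
    _ = ν * besselSeries ν t := by
        simp only [hcoeff, hzero, mul_assoc, tsum_mul_left]
        rw [besselSeries, hsplit, pow_zero, mul_one, mul_add]

noncomputable def besselProdCoeff (μ ν : ℝ) (n : ℕ) : ℝ :=
  ∑ p ∈ antidiagonal n, besselCoeff μ p.1 * besselCoeff ν p.2

lemma succ_mul_besselProdCoeff_succ (μ ν : ℝ) (n : ℕ) :
    (n + 1) * besselProdCoeff μ ν (n + 1) =
      -(besselProdCoeff (μ + 1) ν n + besselProdCoeff μ (ν + 1) n) := by
  have hsplit : (n + 1 : ℝ) * besselProdCoeff μ ν (n + 1) =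
      ∑ p ∈ antidiagonal (n + 1), (p.1 * besselCoeff μ p.1) * besselCoeff ν p.2 +
        ∑ p ∈ antidiagonal (n + 1), besselCoeff μ p.1 * (p.2 * besselCoeff ν p.2) := by
    rw [besselProdCoeff, mul_sum, ← sum_add_distrib]
    refine sum_congr rfl fun p hp => ?_
    have hp' : (p.1 : ℝ) + p.2 = n + 1 := by exact_mod_cast mem_antidiagonal.mp hp
    rw [← hp']
    ring
  rw [hsplit, Nat.sum_antidiagonal_succ, Nat.sum_antidiagonal_succ', besselProdCoeff,
    besselProdCoeff, neg_add, ← sum_neg_distrib, ← sum_neg_distrib]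
  simp only [Nat.cast_zero, zero_mul, mul_zero, zero_add, Nat.cast_add, Nat.cast_one,
    succ_mul_besselCoeff_succ, neg_mul, mul_neg]

/-- The product formula for Bessel series: `(n+μ+ν+1)_n` stands for
`Γ(2n+μ+ν+1) / Γ(n+μ+ν+1)`, and in this form the identity holds without exceptions. -/
lemma besselProdCoeff_eq (n : ℕ) : ∀ μ ν : ℝ, besselProdCoeff μ ν n =
    (-1) ^ n * (ascPochhammer ℝ n).eval (n + μ + ν + 1) * invGamma (n + μ + 1) *
      invGamma (n + ν + 1) / n.factorial := by
  induction n with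
  | zero => intro μ ν; simp [besselProdCoeff, besselCoeff]
  | succ n ih =>
    intro μ ν
    have h := succ_mul_besselProdCoeff_succ μ ν n
    rw [ih, ih] at h
    have hn : (n + 1 : ℝ) ≠ 0 := by positivity
    rw [← mul_right_inj' hn, h, invGamma_eq_mul_invGamma_add_one (n + μ + 1),
      invGamma_eq_mul_invGamma_add_one (n + ν + 1), ascPochhammer_succ_eval, Nat.factorial_succ]
    push_cast
    field_simp
    ring_nf

lemma besselProdCoeff_succ_add_besselProdCoeff (ν : ℝ) (k : ℕ) :
    besselProdCoeff ν (-ν - 1) (k + 1) + besselProdCoeff (ν + 1) (-ν) k = 0 := by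
  rw [besselProdCoeff_eq, besselProdCoeff_eq, ascPochhammer_succ_left]
  simp only [Polynomial.eval_mul, Polynomial.eval_X, Polynomial.eval_comp, Polynomial.eval_add,
    Polynomial.eval_one, Nat.factorial_succ]
  push_cast
  field_simp
  ring_nf

lemma hasSum_besselProdCoeff_mul_pow (μ ν t : ℝ) :
    HasSum (fun n => besselProdCoeff μ ν n * t ^ n) (besselSeries μ t * besselSeries ν t) := by
  have hterm (n : ℕ) :
      ∑ p ∈ antidiagonal n, besselCoeff μ p.1 * t ^ p.1 * (besselCoeff ν p.2 * t ^ p.2) =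
        besselProdCoeff μ ν n * t ^ n := by
    rw [besselProdCoeff, sum_mul]
    refine sum_congr rfl fun p hp => ?_
    rw [← mem_antidiagonal.mp hp, pow_add]
    ring
  have hμ := summable_norm_besselCoeff_mul_pow μ t
  have hν := summable_norm_besselCoeff_mul_pow ν t
  rw [besselSeries, besselSeries, tsum_mul_tsum_eq_tsum_sum_antidiagonal_of_summable_norm hμ hν]
  simp only [hterm]
  exact ((summable_norm_sum_mul_antidiagonal_of_summable_norm hμ hν).of_norm.congr hterm).hasSum

lemma besselSeries_mul_add_mul (ν t : ℝ) :
    besselSeries ν t * besselSeries (-ν - 1) t + t * (besselSeries (ν + 1) t * besselSeries (-ν) t)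
      = invGamma (ν + 1) * invGamma (-ν) := by
  have h := hasSum_besselProdCoeff_mul_pow ν (-ν - 1) t
  have hshift : t * (besselSeries (ν + 1) t * besselSeries (-ν) t) =
      -∑' k : ℕ, besselProdCoeff ν (-ν - 1) (k + 1) * t ^ (k + 1) := by
    rw [(hasSum_besselProdCoeff_mul_pow (ν + 1) (-ν) t).tsum_eq.symm, ← tsum_mul_left, ← tsum_neg]
    congr 1 with k
    rw [eq_neg_of_add_eq_zero_right (besselProdCoeff_succ_add_besselProdCoeff ν k), pow_succ]
    ring
  rw [hshift, ← h.tsum_eq, h.summable.tsum_eq_zero_add, add_neg_cancel_right]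
  simp [besselProdCoeff, besselCoeff]

lemma besselJ_sub_one_add_besselJ_add_one {z : ℝ} (hz : 0 < z) (ν : ℝ) :
    besselJ (ν - 1) z + besselJ (ν + 1) z = 2 * ν / z * besselJ ν z := by
  have hx : 0 < z / 2 := by positivity
  have hup : (z / 2) ^ (ν + 1) = (z / 2) ^ (ν - 1) * (z / 2) ^ 2 := by
    rw [← rpow_natCast, ← rpow_add hx]
    norm_num
    ring_nf
  have hmid : (z / 2) ^ ν = (z / 2) ^ (ν - 1) * (z / 2) := by
    rw [← rpow_add_one hx.ne', sub_add_cancel]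
  simp only [besselJ_eq_rpow_mul_besselSeries hz, hup, hmid]
  rw [mul_assoc, ← mul_add, besselSeries_sub_one_add_mul]
  field_simp

lemma besselJ_add_one_mul_besselJ_neg_add {z : ℝ} (hz : 0 < z) (ν : ℝ) :
    besselJ (ν + 1) z * besselJ (-ν) z + besselJ ν z * besselJ (-ν - 1) z
      = -2 * sin (ν * π) / (π * z) := by
  have hx : 0 < z / 2 := by positivity
  have hplus : (z / 2) ^ (ν + 1) * (z / 2) ^ (-ν) = (z / 2) ^ 2 * (z / 2)⁻¹ := by
    rw [← rpow_add hx, ← rpow_natCast, ← rpow_neg_one, ← rpow_add hx]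
    norm_num
  have hminus : (z / 2) ^ ν * (z / 2) ^ (-ν - 1) = (z / 2)⁻¹ := by
    rw [← rpow_add hx, ← rpow_neg_one]
    ring_nf
  simp only [besselJ_eq_rpow_mul_besselSeries hz]
  set t := (z / 2) ^ 2
  calc _ = (z / 2)⁻¹ * (besselSeries ν t * besselSeries (-ν - 1) t +
        t * (besselSeries (ν + 1) t * besselSeries (-ν) t)) := by
        linear_combination (besselSeries (ν + 1) t * besselSeries (-ν) t) * hplus +
          (besselSeries ν t * besselSeries (-ν - 1) t) * hminus
    _ = _ := by
        rw [besselSeries_mul_add_mul, invGamma_add_one_mul_invGamma_neg]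
        field_simp

lemma besselY_add_one (ν z : ℝ) :
    besselY (ν + 1) z = (besselJ (ν + 1) z * cos (ν * π) + besselJ (-ν - 1) z) / sin (ν * π) := by
  rw [besselY, add_mul, one_mul, sin_add_pi, cos_add_pi, neg_add', ← neg_div_neg_eq]
  ring_nf

lemma besselY_sub_one (ν z : ℝ) :
    besselY (ν - 1) z = (besselJ (ν - 1) z * cos (ν * π) + besselJ (-ν + 1) z) / sin (ν * π) := by
  rw [besselY, sub_mul, one_mul, sin_sub_pi, cos_sub_pi, neg_sub', ← neg_div_neg_eq]
  ring_nf

lemma besselY_sub_one_add_besselY_add_one {z : ℝ} (hz : 0 < z) (ν : ℝ) :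
    besselY (ν - 1) z + besselY (ν + 1) z = 2 * ν / z * besselY ν z := by
  have hJ := besselJ_sub_one_add_besselJ_add_one hz ν
  have hJneg := besselJ_sub_one_add_besselJ_add_one hz (-ν)
  rw [besselY_sub_one, besselY_add_one, besselY, ← add_div, mul_div_assoc']
  congr 1
  linear_combination cos (ν * π) * hJ + hJneg

lemma besselJ_add_one_mul_besselY_sub {z : ℝ} (hz : 0 < z) {ν : ℝ} (hν : sin (ν * π) ≠ 0) :
    besselJ (ν + 1) z * besselY ν z - besselJ ν z * besselY (ν + 1) z = 2 / (π * z) := by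
  have hJJ := besselJ_add_one_mul_besselJ_neg_add hz ν
  have hπ := pi_pos.ne'
  rw [besselY_add_one, besselY]
  field_simp at hJJ ⊢
  linear_combination -hJJ

section Hat

variable {A B : ℝ}

lemma Jhat_sub_one_add_Jhat_add_one (hB : 0 < B) (n : ℤ) :
    Jhat A B (n - 1) + Jhat A B (n + 1) = (A + B * n) * Jhat A B n := by
  simp only [Jhat, Int.cast_sub, Int.cast_add, Int.cast_one, add_right_comm _ (1 : ℝ),
    sub_add_eq_add_sub, besselJ_sub_one_add_besselJ_add_one (div_pos two_pos hB)]
  field_simp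
  ring

lemma Yhat_sub_one_add_Yhat_add_one (hB : 0 < B) (n : ℤ) :
    Yhat A B (n - 1) + Yhat A B (n + 1) = (A + B * n) * Yhat A B n := by
  simp only [Yhat, Int.cast_sub, Int.cast_add, Int.cast_one, add_right_comm _ (1 : ℝ),
    sub_add_eq_add_sub, besselY_sub_one_add_besselY_add_one (div_pos two_pos hB)]
  field_simp
  ring

lemma Ups_add_one_self (hB : 0 < B) (hAB : ∀ k : ℤ, A / B ≠ k) (n : ℤ) :
    Ups (n + 1) n A B = B := by
  have hsin : sin ((n + A / B) * π) ≠ 0 := by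
    refine sin_ne_zero_iff.mpr fun k hk => hAB (k - n) ?_
    have := mul_right_cancel₀ pi_ne_zero hk
    push_cast
    linarith
  rw [Ups, Jhat, Jhat, Yhat, Yhat, Int.cast_add, Int.cast_one, add_right_comm (n : ℝ) 1,
    besselJ_add_one_mul_besselY_sub (div_pos two_pos hB) hsin]
  field_simp

lemma Ups_add_two_self (hB : 0 < B) (n : ℤ) :
    Ups (n + 2) n A B = (A + B * (n + 1)) * Ups (n + 1) n A B := by
  have hJ := Jhat_sub_one_add_Jhat_add_one (A := A) hB (n + 1)
  have hY := Yhat_sub_one_add_Yhat_add_one (A := A) hB (n + 1)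
  rw [add_sub_cancel_right, add_assoc, one_add_one_eq_two] at hJ hY
  push_cast at hJ hY
  rw [Ups, Ups]
  linear_combination π * Yhat A B n * hJ - π * Jhat A B n * hY

end Hat

/-- For real `A` and `B > 0` with `A/B` not an integer, for every `m ∈ ℤ`:
`Δ(m,m,A,B) = B`, `Δ(m+1,m,A,B) = B` and `Δ(m+2,m,A,B) = (A + B(m+1) − 1) B`. -/
theorem stmt_2 (A B : ℝ) (hB : 0 < B) (hAB : ∀ k : ℤ, A / B ≠ (k : ℝ)) :
    ∀ m : ℤ, Dlt m m A B = B ∧ Dlt (m + 1) m A B = B ∧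
      Dlt (m + 2) m A B = (A + B * ((m : ℝ) + 1) - 1) * B := by
  intro m
  have hW := Ups_add_one_self hB hAB
  have hprev := hW (m - 1)
  rw [sub_add_cancel] at hprev
  refine ⟨?_, ?_, ?_⟩
  · rw [Ups] at hprev
    rw [Dlt, Ups, Ups]
    linear_combination hprev
  · rw [Dlt, add_sub_cancel_right, hW, Ups]
    ring
  · rw [Dlt, show m + 2 - 1 = m + 1 by ring, Ups_add_two_self hB, hW]
    ring
end

section
/- Fix a real number z > 0 and a real number c. Then as n → ∞ over the natural numbers, Γ(n + c + 1)·(2/z)^{n+c}·J_{n+c}(z) tends to 1. -/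
/-!
With `w = (z/2)^2`, the series for `Γ(ν+1) (2/z)^ν J_ν(z)` is
`∑ (-1)^m Γ(ν+1) / (m! Γ(m+ν+1)) w^m`, whose `m = 0` term is `1`.
For `ν ≥ 0` and `m ≥ 1` one has `Γ(m+ν+1) ≥ Γ(ν+2) = (ν+1) Γ(ν+1)`, since `Γ` increases on
`[2, ∞)`; so the remaining terms are dominated by `w^m / m! / (ν+1)`, and the series differs
from `1` by at most `(exp w - 1) / (ν+1)`, which tends to `0` along `ν = n + c`.
-/

open Real

open Filter Topology
open scoped Nat

lemma Real.Gamma_div_Gamma_nat_add_le_inv {ν : ℝ} (hν : 0 ≤ ν) {m : ℕ} (hm : m ≠ 0) :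
    Gamma (ν + 1) / Gamma (m + ν + 1) ≤ (ν + 1)⁻¹ := by
  have hm1 : (1 : ℝ) ≤ m := Nat.one_le_cast.2 (Nat.one_le_iff_ne_zero.2 hm)
  have hmono : Gamma (ν + 1 + 1) ≤ Gamma (m + ν + 1) :=
    Gamma_strictMonoOn_Ici.monotoneOn (Set.mem_Ici.2 (by linarith)) (Set.mem_Ici.2 (by linarith))
      (by linarith)
  rw [Gamma_add_one (by positivity)] at hmono
  rw [div_le_iff₀ (Gamma_pos_of_pos (by positivity)), inv_mul_eq_div, le_div_iff₀' (by positivity)]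
  exact hmono

lemma Real.Gamma_div_Gamma_nat_add_le_one {ν : ℝ} (hν : 0 ≤ ν) (m : ℕ) :
    Gamma (ν + 1) / Gamma (m + ν + 1) ≤ 1 := by
  rcases eq_or_ne m 0 with rfl | hm
  · simp [div_self (Gamma_pos_of_pos (by positivity : 0 < ν + 1)).ne']
  · exact (Gamma_div_Gamma_nat_add_le_inv hν hm).trans (inv_le_one_of_one_le₀ (by linarith))

noncomputable def normalizedBesselTerm (ν w : ℝ) (m : ℕ) : ℝ :=
  (-1) ^ m * Gamma (ν + 1) / (m ! * Gamma (m + ν + 1)) * w ^ m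

lemma Gamma_mul_rpow_mul_besselJ_eq_tsum (ν : ℝ) {z : ℝ} (hz : 0 < z) :
    Gamma (ν + 1) * (2 / z) ^ ν * besselJ ν z =
      ∑' m, normalizedBesselTerm ν ((z / 2) ^ 2) m := by
  rw [besselJ, ← tsum_mul_left]
  congr 1 with m
  have hsplit : (z / 2) ^ (2 * (m : ℝ) + ν) = ((z / 2) ^ 2) ^ m * (z / 2) ^ ν := by
    rw [rpow_add (by positivity), ← pow_mul, ← rpow_natCast]
    push_cast
    ring_nf
  have hinv : (2 / z) ^ ν * (z / 2) ^ ν = 1 := by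
    rw [← mul_rpow (by positivity) (by positivity), show 2 / z * (z / 2) = 1 by field_simp,
      one_rpow]
  rw [hsplit, normalizedBesselTerm]
  linear_combination (-1 : ℝ) ^ m * Gamma (ν + 1) / (m ! * Gamma (m + ν + 1)) *
    ((z / 2) ^ 2) ^ m * hinv

lemma abs_normalizedBesselTerm {ν w : ℝ} (hν : -1 < ν) (hw : 0 ≤ w) (m : ℕ) :
    |normalizedBesselTerm ν w m| = w ^ m / m ! * (Gamma (ν + 1) / Gamma (m + ν + 1)) := by
  have hΓ : 0 < Gamma (ν + 1) := Gamma_pos_of_pos (by linarith)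
  have hΓm : 0 < Gamma (m + ν + 1) := Gamma_pos_of_pos (by linarith [m.cast_nonneg (α := ℝ)])
  rw [normalizedBesselTerm, abs_mul, abs_div, abs_mul, abs_pow, abs_neg, abs_one, one_pow,
    one_mul, abs_of_pos hΓ, abs_of_pos (mul_pos (by positivity) hΓm), abs_of_nonneg (by positivity)]
  field_simp

lemma summable_normalizedBesselTerm {ν w : ℝ} (hν : 0 ≤ ν) (hw : 0 ≤ w) :
    Summable (normalizedBesselTerm ν w) :=
  .of_norm_bounded (Real.summable_pow_div_factorial w) fun m => by
    rw [Real.norm_eq_abs, abs_normalizedBesselTerm (by linarith) hw]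
    exact mul_le_of_le_one_right (by positivity) (Gamma_div_Gamma_nat_add_le_one hν m)

lemma normalizedBesselTerm_zero (ν w : ℝ) (hν : -1 < ν) : normalizedBesselTerm ν w 0 = 1 := by
  simp [normalizedBesselTerm, (Gamma_pos_of_pos (by linarith : 0 < ν + 1)).ne']

lemma abs_tsum_normalizedBesselTerm_sub_one_le {ν w : ℝ} (hν : 0 ≤ ν) (hw : 0 ≤ w) :
    |∑' m, normalizedBesselTerm ν w m - 1| ≤ (exp w - 1) / (ν + 1) := by
  have hexp : HasSum (fun m : ℕ => w ^ (m + 1) / ((m + 1)! : ℝ) / (ν + 1))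
      ((exp w - 1) / (ν + 1)) := by
    refine HasSum.div_const ?_ _
    have := (hasSum_nat_add_iff' 1).2 (NormedSpace.expSeries_div_hasSum_exp w)
    simpa [← Real.exp_eq_exp_ℝ] using this
  rw [(summable_normalizedBesselTerm hν hw).tsum_eq_zero_add,
    normalizedBesselTerm_zero ν w (by linarith), add_sub_cancel_left, ← Real.norm_eq_abs]
  refine tsum_of_norm_bounded hexp fun m => ?_
  rw [Real.norm_eq_abs, abs_normalizedBesselTerm (by linarith) hw, div_eq_mul_inv _ (ν + 1)]
  exact mul_le_mul_of_nonneg_left (Gamma_div_Gamma_nat_add_le_inv hν m.succ_ne_zero)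
    (by positivity)

/-- For fixed real `z > 0` and real `c`, as `n → ∞` over the naturals,
`Γ(n + c + 1) (2/z)^(n+c) J_{n+c}(z) → 1`. -/
theorem stmt_4 (z : ℝ) (hz : 0 < z) (c : ℝ) :
    Filter.Tendsto
      (fun n : ℕ =>
        Real.Gamma ((n : ℝ) + c + 1) * (2 / z) ^ ((n : ℝ) + c) * besselJ ((n : ℝ) + c) z)
      Filter.atTop (nhds 1) := by
  have hν : Tendsto (fun n : ℕ => (n : ℝ) + c) atTop atTop :=
    tendsto_atTop_add_const_right _ c tendsto_natCast_atTop_atTop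
  have hbound : Tendsto (fun n : ℕ => (exp ((z / 2) ^ 2) - 1) / ((n : ℝ) + c + 1)) atTop (𝓝 0) :=
    tendsto_const_nhds.div_atTop (tendsto_atTop_add_const_right _ 1 hν)
  refine tendsto_sub_nhds_zero_iff.1 (squeeze_zero_norm' ?_ hbound)
  filter_upwards [hν.eventually_ge_atTop 0] with n hn
  rw [Real.norm_eq_abs, Gamma_mul_rpow_mul_besselJ_eq_tsum _ hz]
  exact abs_tsum_normalizedBesselTerm_sub_one_le hn (by positivity)
end

section
/- Let γ̂ > −1 be real, α ≠ 0 real, and n ∈ ℕ. Define I(n) = ∫_0^1 (1−x)^{γ̂+n}·x·e^{αx} dx and J(0) = ∫_0^1 (1−x)^{γ̂}·e^{αx} dx. Then I(n) = (Γ(γ̂+n+1)/α^n)·[ (I(0) − (n/α)·J(0))/Γ(γ̂+1) + (1/α²)·∑_{m=1}^n ((n+1−m)·α^m)/Γ(γ̂+1+m) ]. -/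
/-!
Integrating by parts against `(1 - x) ^ (γ + k)` gives the recurrences
`(γ + k + 1) J k = 1 + α J (k + 1)` and `(γ + k + 1) I k = J (k + 1) + α I (k + 1)`,
where `J k = ∫₀¹ (1 - x) ^ (γ + k) e^{αx} dx`.
Since `Γ(γ + k + 2) = (γ + k + 1) Γ(γ + k + 1)`, both recurrences telescope once the `k`-th
term is scaled by `α ^ k / Γ(γ + k + 1)`; substituting the resulting closed form of `J` into
that of `I` and exchanging the order of the double sum gives the weights `n + 1 - m`.
-/

open intervalIntegral MeasureTheory Finset Real

lemma intervalIntegrable_one_sub_rpow_mul {s : ℝ} (hs : -1 < s) {g : ℝ → ℝ}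
    (hg : Continuous g) :
    IntervalIntegrable (fun x => (1 - x) ^ s * g x) volume 0 1 := by
  have h := ((intervalIntegrable_rpow' (a := 0) (b := 1) hs).comp_sub_left 1).symm
  simp only [sub_zero, sub_self] at h
  exact h.mul_continuousOn hg.continuousOn

theorem integral_one_sub_rpow_mul_by_parts {s : ℝ} (hs : -1 < s) {f f' : ℝ → ℝ}
    (hf : ∀ x, HasDerivAt f (f' x) x) (hf' : Continuous f') :
    (s + 1) * ∫ x in (0:ℝ)..1, (1 - x) ^ s * f x
      = f 0 + ∫ x in (0:ℝ)..1, (1 - x) ^ (s + 1) * f' x := by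
  have hfc : Continuous f := continuous_iff_continuousAt.2 fun x => (hf x).continuousAt
  have hs1 : 0 < s + 1 := by linarith
  have hderiv : ∀ x ∈ Set.Ioo (0:ℝ) 1, HasDerivAt (fun y => -((1 - y) ^ (s + 1) * f y))
      ((s + 1) * ((1 - x) ^ s * f x) - (1 - x) ^ (s + 1) * f' x) x := by
    intro x hx
    have hpow :
        HasDerivAt (fun y : ℝ => (1 - y) ^ (s + 1)) (-1 * (s + 1) * (1 - x) ^ s) x := by
      simpa using ((hasDerivAt_id x).const_sub 1).rpow_const (p := s + 1)
        (Or.inl (sub_pos.2 hx.2).ne')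
    exact ((hpow.fun_mul (hf x)).fun_neg).congr_deriv (by ring)
  have hcont : ContinuousOn (fun y => -((1 - y) ^ (s + 1) * f y)) (Set.Icc 0 1) :=
    (((continuous_const.sub continuous_id).rpow_const fun _ => Or.inr hs1.le).mul hfc).neg
      |>.continuousOn
  have hint₁ := (intervalIntegrable_one_sub_rpow_mul hs hfc).const_mul (s + 1)
  have hint₂ := intervalIntegrable_one_sub_rpow_mul (s := s + 1) (by linarith) hf'
  have hftc := integral_eq_sub_of_hasDerivAt_of_le zero_le_one hcont hderiv (hint₁.sub hint₂)
  rw [integral_sub hint₁ hint₂, intervalIntegral.integral_const_mul] at hftc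
  simp only [sub_self, zero_rpow hs1.ne', zero_mul, neg_zero, sub_zero, one_rpow, one_mul] at hftc
  linarith

theorem integral_one_sub_rpow_mul_exp_recurrence {s : ℝ} (hs : -1 < s) (α : ℝ) :
    (s + 1) * ∫ x in (0:ℝ)..1, (1 - x) ^ s * exp (α * x)
      = 1 + α * ∫ x in (0:ℝ)..1, (1 - x) ^ (s + 1) * exp (α * x) := by
  have hexp : ∀ x, HasDerivAt (fun y => exp (α * y)) (exp (α * x) * α) x := fun x =>
    ((hasDerivAt_id x).const_mul α).exp.congr_deriv (by simp)
  rw [integral_one_sub_rpow_mul_by_parts hs hexp (by fun_prop), mul_zero, exp_zero,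
    ← intervalIntegral.integral_const_mul]
  simp only [mul_comm, mul_left_comm]

theorem integral_one_sub_rpow_mul_mul_exp_recurrence {s : ℝ} (hs : -1 < s) (α : ℝ) :
    (s + 1) * ∫ x in (0:ℝ)..1, (1 - x) ^ s * x * exp (α * x)
      = (∫ x in (0:ℝ)..1, (1 - x) ^ (s + 1) * exp (α * x))
        + α * ∫ x in (0:ℝ)..1, (1 - x) ^ (s + 1) * x * exp (α * x) := by
  have hderiv : ∀ x, HasDerivAt (fun y => y * exp (α * y))
      (exp (α * x) + α * (x * exp (α * x))) x := fun x =>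
    ((hasDerivAt_id x).fun_mul ((hasDerivAt_id x).const_mul α).exp).congr_deriv
      (by simp only [id_eq, one_mul, mul_one]; ring)
  have hint₁ := intervalIntegrable_one_sub_rpow_mul (s := s + 1) (by linarith)
    (g := fun x => exp (α * x)) (by fun_prop)
  have hint₂ := (intervalIntegrable_one_sub_rpow_mul (s := s + 1) (by linarith)
    (g := fun x => x * exp (α * x)) (by fun_prop)).const_mul α
  simp only [mul_assoc]
  rw [integral_one_sub_rpow_mul_by_parts hs hderiv (by fun_prop), zero_mul, zero_add,
    ← intervalIntegral.integral_const_mul, ← integral_add hint₁ hint₂]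
  simp only [mul_add, mul_left_comm]

theorem pow_mul_div_Gamma_eq_of_recurrence {γ α : ℝ} (hγ : -1 < γ) {u v : ℕ → ℝ}
    (h : ∀ k : ℕ, (γ + k + 1) * u k = v k + α * u (k + 1)) (n : ℕ) :
    α ^ n * u n / Gamma (γ + n + 1)
      = u 0 / Gamma (γ + 1) - ∑ k ∈ range n, α ^ k * v k / Gamma (γ + k + 2) := by
  induction n with
  | zero => simp
  | succ k ih =>
    have hp : 0 < γ + k + 1 := by linarith [k.cast_nonneg (α := ℝ)]
    have hΓ : Gamma (γ + ↑(k + 1) + 1) = (γ + k + 1) * Gamma (γ + k + 1) := by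
      rw [← Gamma_add_one hp.ne']; push_cast; ring_nf
    rw [sum_range_succ, ← sub_sub, ← ih, hΓ, show γ + k + 2 = γ + k + 1 + 1 by ring,
      Gamma_add_one hp.ne']
    have hΓ₀ : Gamma (γ + k + 1) ≠ 0 := (Gamma_pos_of_pos hp).ne'
    field_simp
    linear_combination (-α ^ k) * h k

theorem sum_range_sum_range_succ {R : Type*} [CommRing R] (a : ℕ → R) (n : ℕ) :
    ∑ k ∈ range n, ∑ m ∈ range (k + 1), a m = ∑ m ∈ range n, ((n : R) - m) * a m := by
  induction n with
  | zero => simp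
  | succ n ih =>
    simp only [sum_range_succ _ n, ih, Nat.cast_add_one, sub_self, zero_mul, add_sub_right_comm,
      add_mul, sum_add_distrib, one_mul]
    ring

theorem closed_form_of_recurrences {γ α : ℝ} (hγ : -1 < γ) (hα : α ≠ 0)
    {I J : ℕ → ℝ}
    (hJ : ∀ k : ℕ, (γ + k + 1) * J k = 1 + α * J (k + 1))
    (hI : ∀ k : ℕ, (γ + k + 1) * I k = J (k + 1) + α * I (k + 1)) (n : ℕ) :
    I n = (Gamma (γ + n + 1) / α ^ n) *
      ((I 0 - (n / α) * J 0) / Gamma (γ + 1) +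
        (1 / α ^ 2) * ∑ m ∈ Icc 1 n, ((n : ℝ) + 1 - m) * α ^ m / Gamma (γ + 1 + m)) := by
  set a : ℕ → ℝ := fun m => α ^ m / Gamma (γ + m + 2)
  have hJsol (k : ℕ) :
      α ^ k * J k / Gamma (γ + k + 1) = J 0 / Gamma (γ + 1) - ∑ m ∈ range k, a m := by
    simpa using pow_mul_div_Gamma_eq_of_recurrence hγ hJ k
  have hJterm (k : ℕ) : α ^ k * J (k + 1) / Gamma (γ + k + 2)
      = α⁻¹ * (J 0 / Gamma (γ + 1) - ∑ m ∈ range (k + 1), a m) := by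
    rw [← hJsol (k + 1)]
    push_cast
    field_simp
    ring_nf
  have hIcc : ∑ m ∈ Icc 1 n, ((n : ℝ) + 1 - m) * α ^ m / Gamma (γ + 1 + m)
      = α * ∑ m ∈ range n, ((n : ℝ) - m) * a m := by
    rw [← Finset.Ico_add_one_right_eq_Icc, sum_Ico_eq_sum_range, mul_sum]
    refine sum_congr (by simp) fun m _ => ?_
    simp only [a]
    push_cast
    ring_nf
  have hIsol := pow_mul_div_Gamma_eq_of_recurrence hγ hI n
  rw [sum_congr rfl fun k _ => hJterm k, ← mul_sum, sum_sub_distrib, sum_range_sum_range_succ,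
    sum_const, card_range, nsmul_eq_mul] at hIsol
  have hΓ : Gamma (γ + n + 1) ≠ 0 :=
    (Gamma_pos_of_pos (by linarith [n.cast_nonneg (α := ℝ)])).ne'
  rw [hIcc]
  field_simp at hIsol ⊢
  linear_combination hIsol

/-- For `γ̂ > −1`, `α ≠ 0` and `n ∈ ℕ`, with
`I(n) = ∫₀¹ (1−x)^{γ̂+n} x e^{αx} dx` and `J(0) = ∫₀¹ (1−x)^{γ̂} e^{αx} dx`,
`I(n) = (Γ(γ̂+n+1)/αⁿ)·[(I(0) − (n/α)·J(0))/Γ(γ̂+1)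
        + (1/α²)·∑_{m=1}^n (n+1−m)·α^m/Γ(γ̂+1+m)]`. -/
theorem stmt_11 (γ α : ℝ) (hγ : -1 < γ) (hα : α ≠ 0) (n : ℕ)
    (I : ℕ → ℝ)
    (hI : ∀ k : ℕ, I k = ∫ x in (0:ℝ)..1, (1 - x) ^ (γ + (k : ℝ)) * x * Real.exp (α * x))
    (J0 : ℝ) (hJ0 : J0 = ∫ x in (0:ℝ)..1, (1 - x) ^ γ * Real.exp (α * x)) :
    I n = (Real.Gamma (γ + (n : ℝ) + 1) / α ^ n) *
      ((I 0 - ((n : ℝ) / α) * J0) / Real.Gamma (γ + 1) +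
        (1 / α ^ 2) * ∑ m ∈ Finset.Icc 1 n,
          ((n : ℝ) + 1 - (m : ℝ)) * α ^ m / Real.Gamma (γ + 1 + (m : ℝ))) := by
  set J : ℕ → ℝ := fun k => ∫ x in (0:ℝ)..1, (1 - x) ^ (γ + (k : ℝ)) * exp (α * x)
  have hs (k : ℕ) : -1 < γ + k := by linarith [k.cast_nonneg (α := ℝ)]
  have hsucc (k : ℕ) : γ + ((k + 1 : ℕ) : ℝ) = γ + k + 1 := by push_cast; ring
  have hJrec (k : ℕ) : (γ + k + 1) * J k = 1 + α * J (k + 1) := by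
    simp only [J, hsucc]
    exact integral_one_sub_rpow_mul_exp_recurrence (hs k) α
  have hIrec (k : ℕ) : (γ + k + 1) * I k = J (k + 1) + α * I (k + 1) := by
    simp only [J, hI, hsucc]
    exact integral_one_sub_rpow_mul_mul_exp_recurrence (hs k) α
  have hJ0' : J 0 = J0 := by simp [J, hJ0]
  rw [← hJ0']
  exact closed_form_of_recurrences hγ hα hJrec hIrec n
end

section
/- Let α ≥ 0 and K ≥ 0 be real numbers, and for m ∈ ℕ define 𝒜_m(K) = ∑_{j=0}^m binom(m,j)·α^j·Γ(m+K−j+1). Then for every m ≥ 1, 𝒜_m(K) ≤ Γ(m+K+1)·e^{α·m/(m+K)}. -/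
/-!
Write `x = α m / (m + K)`. Termwise, `C(m,j) j! = m (m-1) ⋯ (m-j+1)` and
`Γ(m+K+1) = Γ(m+K-j+1) (m+K) (m+K-1) ⋯ (m+K-j+1)`, and `(m-i)/m ≤ (m+K-i)/(m+K)` for each factor,
so the `j`-th term of `𝒜_m(K)` is at most `Γ(m+K+1) x^j / j!`. Summing, `𝒜_m(K)` is bounded by
`Γ(m+K+1)` times a partial sum of the exponential series of `x ≥ 0`.
-/

/-- `𝒜_m(K) = ∑_{j=0}^m C(m,j) α^j Γ(m+K−j+1)`. -/
noncomputable def scrA (α K : ℝ) (m : ℕ) : ℝ :=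
  ∑ j ∈ Finset.range (m + 1),
    (m.choose j : ℝ) * α ^ j * Real.Gamma ((m : ℝ) + K - (j : ℝ) + 1)

open Finset

theorem Real.Gamma_add_one_eq_Gamma_sub_mul_prod (x : ℝ) (n : ℕ) (hx : ∀ i < n, x ≠ i) :
    Real.Gamma (x + 1) = Real.Gamma (x - n + 1) * ∏ i ∈ range n, (x - i) := by
  induction n with
  | zero => simp
  | succ n ih =>
    have hxn : x - n ≠ 0 := sub_ne_zero.mpr (hx n n.lt_succ_self)
    have hΓ : Real.Gamma (x - n + 1) = (x - n) * Real.Gamma (x - (n + 1 : ℕ) + 1) := by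
      rw [Real.Gamma_add_one hxn]
      push_cast
      ring_nf
    rw [ih fun i hi => hx i (Nat.lt_succ_of_lt hi), hΓ, prod_range_succ]
    ring

theorem descFactorial_mul_pow_le {m j : ℕ} (hj : j ≤ m) {K : ℝ} (hK : 0 ≤ K) :
    (m.descFactorial j : ℝ) * ((m : ℝ) + K) ^ j ≤ (m : ℝ) ^ j * ∏ i ∈ range j, ((m : ℝ) + K - i) := by
  have hcast : (m.descFactorial j : ℝ) = ∏ i ∈ range j, ((m : ℝ) - i) := by
    rw [Nat.descFactorial_eq_prod_range, Nat.cast_prod]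
    refine prod_congr rfl fun i hi => Nat.cast_sub ?_
    exact ((mem_range.mp hi).trans_le hj).le
  have hleft := prod_mul_pow_card (s := range j) (f := fun i : ℕ => (m : ℝ) - i) (b := (m : ℝ) + K)
  have hright := pow_card_mul_prod (s := range j) (f := fun i : ℕ => (m : ℝ) + K - i) (b := (m : ℝ))
  rw [card_range] at hleft hright
  rw [hcast, hleft, hright]
  apply prod_le_prod <;> intro i hi
  · have him : (i : ℝ) ≤ m := by exact_mod_cast ((mem_range.mp hi).trans_le hj).le
    exact mul_nonneg (sub_nonneg.mpr him) (by positivity)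
  · nlinarith [mul_nonneg (Nat.cast_nonneg (α := ℝ) i) hK]

theorem choose_mul_pow_mul_Gamma_le {α K : ℝ} (hα : 0 ≤ α) (hK : 0 ≤ K) {m j : ℕ}
    (hmK : 0 < (m : ℝ) + K) (hj : j ≤ m) :
    (m.choose j : ℝ) * α ^ j * Real.Gamma ((m : ℝ) + K - j + 1)
      ≤ Real.Gamma ((m : ℝ) + K + 1) * ((α * m / ((m : ℝ) + K)) ^ j / j.factorial) := by
  have hjm : (j : ℝ) ≤ m := by exact_mod_cast hj
  have hΓ := Real.Gamma_add_one_eq_Gamma_sub_mul_prod ((m : ℝ) + K) j fun i hi h => by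
    have : (i : ℝ) < j := by exact_mod_cast hi
    linarith
  have hdesc : (m.choose j : ℝ) * j.factorial = m.descFactorial j := by
    rw [Nat.descFactorial_eq_factorial_mul_choose]; push_cast; ring
  have hΓnonneg : 0 ≤ Real.Gamma ((m : ℝ) + K - j + 1) := (Real.Gamma_pos_of_pos (by linarith)).le
  rw [hΓ, div_pow, mul_pow, div_div, mul_div_assoc', le_div_iff₀ (by positivity)]
  calc (m.choose j : ℝ) * α ^ j * Real.Gamma ((m : ℝ) + K - j + 1) * (((m : ℝ) + K) ^ j * j.factorial)
      = α ^ j * Real.Gamma ((m : ℝ) + K - j + 1) * ((m.descFactorial j : ℝ) * ((m : ℝ) + K) ^ j) := by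
        rw [← hdesc]; ring
    _ ≤ α ^ j * Real.Gamma ((m : ℝ) + K - j + 1) * ((m : ℝ) ^ j * ∏ i ∈ range j, ((m : ℝ) + K - i)) :=
        mul_le_mul_of_nonneg_left (descFactorial_mul_pow_le hj hK) (by positivity)
    _ = _ := by ring

/-- For real `α ≥ 0` and `K ≥ 0`, for every `m ≥ 1`,
`𝒜_m(K) ≤ Γ(m+K+1) e^{αm/(m+K)}`. -/
theorem stmt_13 (α K : ℝ) (hα : 0 ≤ α) (hK : 0 ≤ K) :
    ∀ m : ℕ, 1 ≤ m →
      scrA α K m ≤ Real.Gamma ((m : ℝ) + K + 1) * Real.exp (α * (m : ℝ) / ((m : ℝ) + K)) := by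
  intro m hm
  have hmK : (0 : ℝ) < m + K := by
    have : (1 : ℝ) ≤ m := by exact_mod_cast hm
    linarith
  calc scrA α K m
      ≤ ∑ j ∈ range (m + 1),
          Real.Gamma ((m : ℝ) + K + 1) * ((α * m / ((m : ℝ) + K)) ^ j / j.factorial) :=
        sum_le_sum fun j hj =>
          choose_mul_pow_mul_Gamma_le hα hK hmK (Nat.lt_succ_iff.mp (mem_range.mp hj))
    _ = Real.Gamma ((m : ℝ) + K + 1) * ∑ j ∈ range (m + 1), (α * m / ((m : ℝ) + K)) ^ j / j.factorial :=
        (mul_sum ..).symm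
    _ ≤ Real.Gamma ((m : ℝ) + K + 1) * Real.exp (α * (m : ℝ) / ((m : ℝ) + K)) :=
        mul_le_mul_of_nonneg_left (Real.sum_le_exp_of_nonneg (by positivity) _)
          (Real.Gamma_pos_of_pos (by linarith)).le
end

section
/- Let α ≥ 0 and K ≥ 0 be real numbers, and for m ∈ ℕ define 𝒜_m(K) = ∑_{j=0}^m binom(m,j)·α^j·Γ(m+K−j+1). Then 𝒜_m(K)/Γ(m+K+1) converges to e^α as m → ∞. -/
/-!
Since `Γ(m+K+1) = Γ(m+K-j+1) ∏_{i<j} (m+K-i)` and `C(m,j) = ∏_{i<j} (m-i) / j!`, the `j`-th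
summand of `𝒜_m(K)/Γ(m+K+1)` is `α^j/j! · ∏_{i<j} (m-i)/(m+K-i)`. For `K ≥ 0` every factor of
the product lies in `[0, 1]` and tends to `1` as `m → ∞`, so dominated convergence against
`∑ |α|^j/j!` gives the limit `∑ α^j/j! = e^α`.
-/

open Filter Finset Nat Topology

theorem Real.Gamma_add_one_eq_descPochhammer_mul {x : ℝ} {j : ℕ} (hx : (j : ℝ) < x + 1) :
    Real.Gamma (x + 1) = (descPochhammer ℝ j).eval x * Real.Gamma (x - j + 1) := by
  induction j with
  | zero => simp
  | succ j ih =>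
    push_cast at hx
    have hj : x - j - 1 + 1 ≠ 0 := by linarith
    rw [ih (by linarith), ← sub_add_cancel (x - j) 1, Real.Gamma_add_one hj,
      descPochhammer_succ_right]
    simp only [Polynomial.eval_mul, Polynomial.eval_sub, Polynomial.eval_X, Polynomial.eval_natCast]
    push_cast
    ring_nf

/-- For `j > m` the factor `i = m` vanishes, so the sum over `j` may run over all of `ℕ`. -/
noncomputable def scrATerm (α K : ℝ) (m j : ℕ) : ℝ :=
  α ^ j / j ! * ∏ i ∈ range j, (((m : ℝ) - i) / ((m : ℝ) + K - i))

theorem scrATerm_eq_zero_of_lt {α K : ℝ} {m j : ℕ} (h : m < j) : scrATerm α K m j = 0 := by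
  refine mul_eq_zero_of_right _ (prod_eq_zero (mem_range.2 h) ?_)
  simp

theorem choose_mul_Gamma_div_Gamma_eq_scrATerm {α K : ℝ} (hK : 0 ≤ K) {m j : ℕ} (hj : j ≤ m) :
    (m.choose j : ℝ) * α ^ j * Real.Gamma ((m : ℝ) + K - j + 1) / Real.Gamma ((m : ℝ) + K + 1)
      = scrATerm α K m j := by
  have hjm : (j : ℝ) ≤ m := by exact_mod_cast hj
  have hΓ := Real.Gamma_add_one_eq_descPochhammer_mul (x := (m : ℝ) + K) (j := j) (by linarith)
  have hne : (descPochhammer ℝ j).eval ((m : ℝ) + K) * Real.Gamma ((m : ℝ) + K - j + 1) ≠ 0 :=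
    hΓ ▸ (Real.Gamma_pos_of_pos (by linarith)).ne'
  rw [scrATerm, hΓ, prod_div_distrib, ← descPochhammer_eval_eq_prod_range,
    ← descPochhammer_eval_eq_prod_range, Nat.cast_choose_eq_descPochhammer_div]
  have := right_ne_zero_of_mul hne
  have := left_ne_zero_of_mul hne
  field_simp

theorem scrA_div_Gamma_eq_tsum {α K : ℝ} (hK : 0 ≤ K) (m : ℕ) :
    scrA α K m / Real.Gamma ((m : ℝ) + K + 1) = ∑' j, scrATerm α K m j := by
  rw [tsum_eq_sum (s := range (m + 1)) fun j hj ↦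
      scrATerm_eq_zero_of_lt (by simpa [Nat.lt_succ_iff] using hj),
    scrA, sum_div]
  exact sum_congr rfl fun j hj ↦
    choose_mul_Gamma_div_Gamma_eq_scrATerm hK (Nat.lt_succ_iff.1 (mem_range.1 hj))

theorem tendsto_scrATerm (α K : ℝ) (j : ℕ) :
    Tendsto (fun m ↦ scrATerm α K m j) atTop (𝓝 (α ^ j / j !)) := by
  have hfactor (i : ℕ) : Tendsto (fun m : ℕ ↦ ((m : ℝ) - i) / ((m : ℝ) + K - i)) atTop (𝓝 1) := by
    convert tendsto_add_mul_div_add_mul_atTop_nhds (-(i : ℝ)) (K - i) 1 one_ne_zero using 2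
    · ring_nf
    · exact (div_one 1).symm
  simpa only [scrATerm, mul_one, prod_const_one] using
    tendsto_const_nhds.mul (tendsto_finsetProd (range j) fun i _ ↦ hfactor i)

theorem abs_scrATerm_le {α K : ℝ} (hK : 0 ≤ K) (m j : ℕ) :
    |scrATerm α K m j| ≤ |α| ^ j / j ! := by
  rcases lt_or_ge m j with hmj | hjm
  · rw [scrATerm_eq_zero_of_lt hmj, abs_zero]
    positivity
  have hfactor : ∀ i ∈ range j, |((m : ℝ) - i) / ((m : ℝ) + K - i)| ≤ 1 := by
    intro i hi
    have him : (i : ℝ) ≤ m := by exact_mod_cast (mem_range.1 hi).le.trans hjm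
    rw [abs_of_nonneg (div_nonneg (by linarith) (by linarith))]
    exact div_le_one_of_le₀ (by linarith) (by linarith)
  rw [scrATerm, abs_mul, abs_prod, abs_div, abs_pow, Nat.abs_cast]
  exact mul_le_of_le_one_right (by positivity)
    (prod_le_one (fun _ _ ↦ abs_nonneg _) hfactor)

theorem stmt_14_general (α K : ℝ) (hK : 0 ≤ K) :
    Filter.Tendsto (fun m : ℕ => scrA α K m / Real.Gamma ((m : ℝ) + K + 1))
      Filter.atTop (nhds (Real.exp α)) := by
  simp_rw [scrA_div_Gamma_eq_tsum hK, Real.exp_eq_exp_ℝ, NormedSpace.exp_eq_tsum_div]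
  exact tendsto_tsum_of_dominated_convergence (Real.summable_pow_div_factorial |α|)
    (tendsto_scrATerm α K) (Eventually.of_forall fun m j ↦ abs_scrATerm_le hK m j)

/-- For real `α ≥ 0` and `K ≥ 0`,
`𝒜_m(K)/Γ(m+K+1) → e^α` as `m → ∞`. -/
theorem stmt_14 (α K : ℝ) (hα : 0 ≤ α) (hK : 0 ≤ K) :
    Filter.Tendsto (fun m : ℕ => scrA α K m / Real.Gamma ((m : ℝ) + K + 1))
      Filter.atTop (nhds (Real.exp α)) :=
  stmt_14_general α K hK
end
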